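/- arXiv:2112.09683 — 2 statements merged into one kernel-verified Lean document; each statement's English description precedes it below -/
import Mathlib

section
/- For a monotone nondecreasing sequence of events (E_n), P(limsup E_n) = 1 if and only if there exists a strictly increasing sequence (t_k) of positive integers with ∑_k P(E_{t_k} | complement of E_{t_{k-1}}) = ∞ (interpreting a term as +∞, or the condition as satisfied, when P(complement of E_{t_{k-1}}) = 0). -/
open MeasureTheory Filter Set ProbabilityTheory
open scoped ENNReal Topology ProbabilityTheory

/-!
Since the events increase, `limsup E = ⋃ n, E n`. If this union has full measure, then for every
`n` with `P(E nᶜ) > 0` the conditional probabilities `P(E m | E nᶜ)` tend to `1` as `m → ∞`, so one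
can choose `t (k + 1) > t k` with `P(E (t (k + 1)) | E (t k)ᶜ) ≥ 1/2`, and the series diverges.
Conversely, if `ε = P((⋃ n, E n)ᶜ) > 0`, every term `P(E (t (k + 1)) | E (t k)ᶜ)` is at most
`ε⁻¹ P(E (t (k + 1)) \ E (t k))`, and these differences are disjoint, so the series is at most
`ε⁻¹`.
-/

theorem Monotone.limsup_atTop_eq_iSup {α : Type*} [CompleteLattice α] {u : ℕ → α}
    (hu : Monotone u) : limsup u atTop = ⨆ n, u n := by
  simp only [limsup_eq_iInf_iSup_of_nat', hu.iSup_nat_add, iInf_const]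

theorem exists_strictMono_rel_succ {P : ℕ → ℕ → Prop} (h : ∀ n, ∀ᶠ m in atTop, P n m) (a : ℕ) :
    ∃ t : ℕ → ℕ, t 0 = a ∧ StrictMono t ∧ ∀ k, P (t k) (t (k + 1)) := by
  choose f hf hlt using fun n ↦ ((h n).and (eventually_gt_atTop n)).exists
  refine ⟨fun k ↦ f^[k] a, rfl, strictMono_nat_of_lt_succ fun k ↦ ?_, fun k ↦ ?_⟩
  · simpa only [Function.iterate_succ_apply'] using hlt _
  · simpa only [Function.iterate_succ_apply'] using hf _

section

variable {Ω : Type*} [MeasurableSpace Ω] {μ : Measure Ω}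

theorem tendsto_cond_atTop_one [IsFiniteMeasure μ] {E : ℕ → Set Ω} (hmono : Monotone E)
    (hfull : μ (⋃ n, E n)ᶜ = 0) {A : Set Ω} (hA : μ A ≠ 0) :
    Tendsto (fun n ↦ μ[E n | A]) atTop (𝓝 1) := by
  have : IsProbabilityMeasure μ[|A] := cond_isProbabilityMeasure hA
  have hfull' : μ[|A] (⋃ n, E n) = 1 := by
    rw [measure_congr (ae_eq_univ.2 (cond_absolutelyContinuous hfull)), measure_univ]
  rw [← hfull']
  exact tendsto_measure_iUnion_atTop hmono

theorem tsum_measure_sdiff_succ_le {F : ℕ → Set Ω} (hmono : Monotone F)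
    (hF : ∀ k, MeasurableSet (F k)) {S : Set Ω} (hS : ∀ k, F k ⊆ S) :
    ∑' k, μ (F (k + 1) \ F k) ≤ μ S := by
  have hsucc (k : ℕ) : F (k + 1) \ F k = disjointed F (k + 1) :=
    (hmono.disjointed_succ (not_isMax k)).symm
  simp only [hsucc]
  calc ∑' k, μ (disjointed F (k + 1)) ≤ μ (⋃ k, disjointed F (k + 1)) :=
        tsum_meas_le_meas_iUnion_of_disjoint μ (fun k ↦ MeasurableSet.disjointed hF _)
          ((disjoint_disjointed F).comp_of_injective (add_left_injective 1))
    _ ≤ μ S := measure_mono (iUnion_subset fun k ↦ (disjointed_subset F _).trans (hS _))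

theorem tsum_cond_succ_compl_le {F : ℕ → Set Ω} (hmono : Monotone F)
    (hF : ∀ k, MeasurableSet (F k)) {S : Set Ω} (hS : ∀ k, F k ⊆ S) :
    ∑' k, μ[F (k + 1) | (F k)ᶜ] ≤ (μ Sᶜ)⁻¹ * μ S := by
  calc ∑' k, μ[F (k + 1) | (F k)ᶜ] ≤ ∑' k, (μ Sᶜ)⁻¹ * μ (F (k + 1) \ F k) := by
        refine ENNReal.tsum_le_tsum fun k ↦ ?_
        rw [cond_apply (hF k).compl, inter_comm, ← sdiff_eq]
        gcongr
        exact hS k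
    _ ≤ (μ Sᶜ)⁻¹ * μ S := by
        rw [ENNReal.tsum_mul_left]
        gcongr
        exact tsum_measure_sdiff_succ_le hmono hF hS

end

theorem stmt5_general {Ω : Type*} [MeasurableSpace Ω] (μ : Measure Ω) [IsProbabilityMeasure μ]
    (E : ℕ → Set Ω) (hE : ∀ n, MeasurableSet (E n))
    (hmono : Monotone E) :
    μ (Filter.limsup E Filter.atTop) = 1 ↔
      ∃ t : ℕ → ℕ, t 0 = 0 ∧ StrictMono t ∧
        ((∃ k, μ ((E (t k))ᶜ) = 0) ∨
          ∑' k : ℕ, μ[E (t (k + 1)) | (E (t k))ᶜ] = ∞) := by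
  rw [hmono.limsup_atTop_eq_iSup, iSup_eq_iUnion, ← prob_compl_eq_zero_iff (.iUnion hE)]
  constructor
  · intro hfull
    by_cases hnull : ∃ n, μ (E n)ᶜ = 0
    · exact ⟨id, rfl, strictMono_id, Or.inl hnull⟩
    push Not at hnull
    obtain ⟨t, ht0, ht, hhalf⟩ := exists_strictMono_rel_succ (fun n ↦
      (tendsto_cond_atTop_one hmono hfull (hnull n)).eventually_const_le ENNReal.one_half_lt_one) 0
    refine ⟨t, ht0, ht, Or.inr (top_le_iff.1 ?_)⟩
    calc ∞ = ∑' _ : ℕ, (2⁻¹ : ℝ≥0∞) := (ENNReal.tsum_const_eq_top_of_ne_zero (by norm_num)).symm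
      _ ≤ _ := ENNReal.tsum_le_tsum hhalf
  · rintro ⟨t, -, ht, ⟨k, hk⟩ | hsum⟩
    · exact measure_mono_null (compl_subset_compl.2 (subset_iUnion E (t k))) hk
    · by_contra hpos
      have hbound := tsum_cond_succ_compl_le (μ := μ) (F := fun k ↦ E (t k))
        (hmono.comp ht.monotone) (fun k ↦ hE (t k)) (fun k ↦ subset_iUnion E (t k))
      rw [hsum, top_le_iff] at hbound
      exact ENNReal.mul_ne_top (ENNReal.inv_ne_top.2 hpos) (measure_ne_top μ _) hbound

/-- For a nondecreasing sequence of events `(E n)` (with `E 0 = ∅`),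
`P(limsup E n) = 1` iff there is a strictly increasing sequence `(t k)` with `t 0 = 0`
such that `∑ k, P(E (t (k+1)) | (E (t k))ᶜ) = ∞`, the condition being regarded as
satisfied when some `P((E (t k))ᶜ) = 0`. -/
theorem stmt5 {Ω : Type*} [MeasurableSpace Ω] (μ : Measure Ω) [IsProbabilityMeasure μ]
    (E : ℕ → Set Ω) (hE : ∀ n, MeasurableSet (E n)) (hE0 : E 0 = ∅)
    (hmono : Monotone E) :
    μ (Filter.limsup E Filter.atTop) = 1 ↔
      ∃ t : ℕ → ℕ, t 0 = 0 ∧ StrictMono t ∧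
        ((∃ k, μ ((E (t k))ᶜ) = 0) ∨
          ∑' k : ℕ, μ[E (t (k + 1)) | (E (t k))ᶜ] = ∞) :=
  stmt5_general μ E hE hmono
end

section
/- (BRS inequality, Bruss–Robertson–Steele) Let X_1, ..., X_n be positive, jointly continuously distributed random variables where each X_k has absolutely continuous distribution function F_k, and let X_{1,n} ≤ ... ≤ X_{n,n} be their increasing order statistics. For fixed s > 0, define N(n,s) = 0 if X_{1,n} > s and otherwise N(n,s) = max{k : X_{1,n} + ... + X_{k,n} ≤ s}. Then E(N(n,s)) ≤ ∑_{k=1}^n F_k(t), where t = t(n,s) is the unique solution of ∑_{k=1}^n ∫_0^t x dF_k(x) = s. No independence of the X_k is assumed. -/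
/-!
Fix `t > 0` and a set `A` of indices with `∑_{k ∈ A} x k ≤ s`. Since
`(t - x k) * (1_A(k) - 1_{x k ≤ t}) ≤ 0` for every `k`, summing over `k` gives
`t * #A + ∑_{x k ≤ t} x k ≤ t * #{k | x k ≤ t} + s`.
Take for `A` a largest such set, so `#A = N(n,s)`, and integrate: the second term on the left
has expectation `∑ k, ∫_0^t x dF_k(x) = s` by the choice of `t`, so it cancels against `s`
and leaves `t * E(N(n,s)) ≤ t * ∑ k, F_k(t)`.
-/

open MeasureTheory ProbabilityTheory Filter Set
open scoped ENNReal Topology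

noncomputable def maxCardSumLe {ι : Type*} [Fintype ι] (x : ι → ℝ) (s : ℝ) : ℕ :=
  sSup {m : ℕ | ∃ A : Finset ι, A.card = m ∧ ∑ i ∈ A, x i ≤ s}

section Pointwise

variable {ι : Type*} [Fintype ι]

theorem exists_card_eq_maxCardSumLe (x : ι → ℝ) {s : ℝ} (hs : 0 ≤ s) :
    ∃ A : Finset ι, A.card = maxCardSumLe x s ∧ ∑ i ∈ A, x i ≤ s := by
  refine Nat.sSup_mem (s := {m | ∃ A : Finset ι, A.card = m ∧ ∑ i ∈ A, x i ≤ s})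
    ⟨0, ∅, by simp, by simpa using hs⟩ ⟨Fintype.card ι, ?_⟩
  rintro m ⟨A, rfl, -⟩
  exact A.card_le_univ

theorem mul_card_add_sum_indicator_le (x : ι → ℝ) {A : Finset ι} {s : ℝ}
    (hA : ∑ i ∈ A, x i ≤ s) (t : ℝ) :
    t * A.card + ∑ i, (Iic t).indicator id (x i) ≤
      t * ∑ i, (Iic t).indicator 1 (x i) + s := by
  classical
  have hterm : ∀ i, (if i ∈ A then t else 0) + (Iic t).indicator id (x i) ≤
      t * (Iic t).indicator 1 (x i) + (if i ∈ A then x i else 0) := by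
    intro i
    by_cases hxi : x i ≤ t
    · by_cases hi : i ∈ A <;> simp [hi, hxi]
    · by_cases hi : i ∈ A <;> simp [hi, hxi, (not_le.mp hxi).le]
  calc t * A.card + ∑ i, (Iic t).indicator id (x i)
      = ∑ i, ((if i ∈ A then t else 0) + (Iic t).indicator id (x i)) := by
        simp [Finset.sum_add_distrib, mul_comm]
    _ ≤ ∑ i, (t * (Iic t).indicator 1 (x i) + (if i ∈ A then x i else 0)) :=
        Finset.sum_le_sum fun i _ => hterm i
    _ = t * ∑ i, (Iic t).indicator 1 (x i) + ∑ i ∈ A, x i := by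
        simp [Finset.sum_add_distrib, Finset.mul_sum]
    _ ≤ t * ∑ i, (Iic t).indicator 1 (x i) + s := by linarith

theorem ofReal_mul_maxCardSumLe_add_sum_indicator_le {x : ι → ℝ} (hx : ∀ i, 0 ≤ x i)
    {s : ℝ} (hs : 0 ≤ s) {t : ℝ} (ht : 0 ≤ t) :
    ENNReal.ofReal t * maxCardSumLe x s + ∑ i, (Iic t).indicator ENNReal.ofReal (x i) ≤
      ENNReal.ofReal t * ∑ i, (Iic t).indicator 1 (x i) + ENNReal.ofReal s := by
  obtain ⟨A, hAcard, hAsum⟩ := exists_card_eq_maxCardSumLe x hs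
  have hreal := mul_card_add_sum_indicator_le x hAsum t
  rw [hAcard] at hreal
  have hid : ∀ i, 0 ≤ (Iic t).indicator id (x i) := fun i => indicator_nonneg (fun y _ => hx i) _
  have hone : ∀ i, 0 ≤ (Iic t).indicator (1 : ℝ → ℝ) (x i) :=
    fun i => indicator_nonneg (fun _ _ => zero_le_one) _
  have hofReal_id : ∀ i, ENNReal.ofReal ((Iic t).indicator id (x i)) =
      (Iic t).indicator ENNReal.ofReal (x i) := fun i => by
    by_cases hxi : x i ≤ t <;> simp [hxi]
  have hofReal_one : ∀ i, ENNReal.ofReal ((Iic t).indicator 1 (x i)) =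
      (Iic t).indicator 1 (x i) := fun i => by
    by_cases hxi : x i ≤ t <;> simp [hxi]
  have := ENNReal.ofReal_le_ofReal hreal
  rw [ENNReal.ofReal_add (by positivity) (Finset.sum_nonneg fun i _ => hid i),
    ENNReal.ofReal_add (mul_nonneg ht (Finset.sum_nonneg fun i _ => hone i)) hs,
    ENNReal.ofReal_mul ht, ENNReal.ofReal_mul ht, ENNReal.ofReal_natCast,
    ENNReal.ofReal_sum_of_nonneg fun i _ => hid i,
    ENNReal.ofReal_sum_of_nonneg fun i _ => hone i] at this
  simpa only [hofReal_id, hofReal_one] using this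

end Pointwise

theorem lintegral_le_of_ae_mul_add_le {Ω : Type*} [MeasurableSpace Ω] {μ : Measure Ω}
    [IsProbabilityMeasure μ] {f g h : Ω → ℝ≥0∞} {c d : ℝ≥0∞} (hc₀ : c ≠ 0) (hc : c ≠ ∞)
    (hd : d ≠ ∞) (hg : AEMeasurable g μ) (hgd : ∫⁻ ω, g ω ∂μ = d)
    (hle : ∀ᵐ ω ∂μ, c * f ω + g ω ≤ c * h ω + d) :
    ∫⁻ ω, f ω ∂μ ≤ ∫⁻ ω, h ω ∂μ := by
  have hsum : c * ∫⁻ ω, f ω ∂μ + d ≤ c * ∫⁻ ω, h ω ∂μ + d :=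
    calc c * ∫⁻ ω, f ω ∂μ + d = ∫⁻ ω, (c * f ω + g ω) ∂μ := by
          rw [lintegral_add_right' _ hg, lintegral_const_mul' _ _ hc, hgd]
      _ ≤ ∫⁻ ω, (c * h ω + d) ∂μ := lintegral_mono_ae hle
      _ = c * ∫⁻ ω, h ω ∂μ + d := by
          rw [lintegral_add_right _ measurable_const, lintegral_const_mul' _ _ hc,
            lintegral_const, measure_univ, mul_one]
  exact (ENNReal.mul_le_mul_iff_right hc₀ hc).mp ((ENNReal.add_le_add_iff_right hd).mp hsum)

theorem lintegral_sum_indicator_comp {Ω ι : Type*} [MeasurableSpace Ω] [Fintype ι]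
    {μ : Measure Ω} {X : ι → Ω → ℝ} (hX : ∀ k, Measurable (X k)) {S : Set ℝ}
    (hS : MeasurableSet S) {f : ℝ → ℝ≥0∞} (hf : Measurable f) :
    ∫⁻ ω, ∑ k, S.indicator f (X k ω) ∂μ = ∑ k, ∫⁻ x in S, f x ∂(μ.map (X k)) := by
  rw [lintegral_finsetSum (f := fun k ω => S.indicator f (X k ω)) _
    fun k _ => (hf.indicator hS).comp (hX k)]
  refine Finset.sum_congr rfl fun k _ => ?_
  rw [← lintegral_indicator hS, lintegral_map (hf.indicator hS) (hX k)]

theorem stmt13_general {Ω : Type*} [MeasurableSpace Ω] (μ : Measure Ω) [IsProbabilityMeasure μ]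
    (n : ℕ) (X : Fin n → Ω → ℝ)
    (hmeas : ∀ k, Measurable (X k))
    (hpos : ∀ k, ∀ᵐ ω ∂μ, 0 < X k ω)
    (s : ℝ) (hs : 0 < s) (t : ℝ) (ht0 : 0 < t)
    (ht : ∑ k : Fin n, ∫⁻ x in Set.Iic t, ENNReal.ofReal x ∂(μ.map (X k)) =
      ENNReal.ofReal s) :
    ∫⁻ ω,
        ((sSup {m : ℕ | ∃ A : Finset (Fin n), A.card = m ∧ ∑ i ∈ A, X i ω ≤ s} : ℕ) :
          ℝ≥0∞) ∂μ ≤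
      ∑ k : Fin n, μ {ω | X k ω ≤ t} := by
  have hcount : ∑ k : Fin n, μ {ω | X k ω ≤ t} =
      ∫⁻ ω, ∑ k, (Iic t).indicator 1 (X k ω) ∂μ := by
    rw [lintegral_sum_indicator_comp hmeas measurableSet_Iic measurable_one]
    simp only [Pi.one_apply, setLIntegral_one]
    exact Finset.sum_congr rfl fun k _ => (Measure.map_apply (hmeas k) measurableSet_Iic).symm
  have hg : Measurable fun ω => ∑ k, (Iic t).indicator ENNReal.ofReal (X k ω) :=
    Finset.measurable_sum _ fun k _ =>
      (ENNReal.measurable_ofReal.indicator measurableSet_Iic).comp (hmeas k)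
  rw [hcount]
  refine lintegral_le_of_ae_mul_add_le (d := ENNReal.ofReal s) (ENNReal.ofReal_pos.mpr ht0).ne'
    ENNReal.ofReal_ne_top ENNReal.ofReal_ne_top hg.aemeasurable ?_ ?_
  · rw [lintegral_sum_indicator_comp hmeas measurableSet_Iic ENNReal.measurable_ofReal, ht]
  · filter_upwards [ae_all_iff.mpr hpos] with ω hω
    exact ofReal_mul_maxCardSumLe_add_sum_indicator_le (fun k => (hω k).le) hs.le ht0.le

/-- (BRS inequality, Bruss–Robertson–Steele) Let `X 1, ..., X n` be
positive random variables (no independence assumed), each with an absolutely continuous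
distribution. For `s > 0` let `N(n,s)(ω)` be the maximal number of the `X k ω` whose sum
does not exceed `s` (equivalently, the maximal `m` such that some `m` of them sum to
at most `s`). If `t` solves `∑ k, ∫_0^t x dF_k(x) = s`, then
`E(N(n,s)) ≤ ∑ k, F_k(t)`. -/
theorem stmt13 {Ω : Type*} [MeasurableSpace Ω] (μ : Measure Ω) [IsProbabilityMeasure μ]
    (n : ℕ) (X : Fin n → Ω → ℝ)
    (hmeas : ∀ k, Measurable (X k))
    (hpos : ∀ k, ∀ᵐ ω ∂μ, 0 < X k ω)
    (hac : ∀ k, μ.map (X k) ≪ MeasureTheory.volume)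
    (s : ℝ) (hs : 0 < s) (t : ℝ) (ht0 : 0 < t)
    (ht : ∑ k : Fin n, ∫⁻ x in Set.Iic t, ENNReal.ofReal x ∂(μ.map (X k)) =
      ENNReal.ofReal s) :
    ∫⁻ ω,
        ((sSup {m : ℕ | ∃ A : Finset (Fin n), A.card = m ∧ ∑ i ∈ A, X i ω ≤ s} : ℕ) :
          ℝ≥0∞) ∂μ ≤
      ∑ k : Fin n, μ {ω | X k ω ≤ t} :=
  stmt13_general μ n X hmeas hpos s hs t ht0 ht
end
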